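/- Let p < q be primes and i a positive integer with q > p^i > 2. If property P₂ holds for m = p^i·q, then (p^i − 2)·q > 2^(p^i) − 2^(p^(i−1)) + 1. -/

import Mathlib

/-!
Put `P = p ^ i`. The irreducible factors of `(X ^ 2 ^ P - X) / (X ^ 2 ^ (P / p) - X)` are exactly
the irreducible polynomials of degree `P`, so it is a squarefree product of such polynomials of
total degree `2 ^ P - 2 ^ (P / p)`; likewise for the prime `q`. If the inequality failed, choose
`1 ≤ k ≤ P - 2` with `k q ≡ u (mod P)` for some `u ∈ {1, 2}` and multiply `u` distinct linear
polynomials, `(k q - u) / P` distinct irreducibles of degree `P` and `P - k` distinct irreducibles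
of degree `q`. This product is squarefree of degree `P q` and of order `lcm (1, P, q) = P q`, but
it is reducible, contradicting `P₂`.
-/

open Polynomial

/-- Property `P₂` for `m`: every squarefree polynomial `f ∈ 𝔽₂[X]` of degree `m`
whose order `o(f)` (the least positive `n` with `f ∣ X^(2^n) - X`) equals `m` is
irreducible. -/
def P2 (m : ℕ) : Prop :=
  ∀ f : Polynomial (ZMod 2), Squarefree f → f.natDegree = m →
    IsLeast {n : ℕ | 0 < n ∧ f ∣ X ^ 2 ^ n - X} m → Irreducible f

open UniqueFactorizationMonoid

namespace Polynomial

variable {K : Type*} [Field K]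

def IsEqualDegree (f : K[X]) (e : ℕ) : Prop :=
  ∀ g : K[X], Irreducible g → g ∣ f → g.natDegree = e

namespace IsEqualDegree

variable {f g : K[X]} {e : ℕ}

theorem of_dvd (hf : f.IsEqualDegree e) (hg : g ∣ f) : g.IsEqualDegree e :=
  fun h hh hhg => hf h hh (hhg.trans hg)

theorem isCoprime {e' : ℕ} (hf : f.IsEqualDegree e) (hg : g.IsEqualDegree e') (hf0 : f ≠ 0)
    (he : e ≠ e') : IsCoprime f g :=
  isCoprime_of_irreducible_dvd (fun h => hf0 h.1)
    fun h hh hhf hhg => he ((hf h hh hhf).symm.trans (hg h hh hhg))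

theorem natDegree_prod_of_le_normalizedFactors [DecidableEq K] (hf : f.IsEqualDegree e)
    {t : Multiset K[X]} (ht : t ≤ normalizedFactors f) :
    t.prod.natDegree = Multiset.card t * e := by
  have hdeg : ∀ g ∈ t, g.natDegree = e := fun g hg =>
    hf g (irreducible_of_normalized_factor g (Multiset.mem_of_le ht hg))
      (dvd_of_mem_normalizedFactors (Multiset.mem_of_le ht hg))
  rw [natDegree_multiset_prod _
      fun h0 => zero_notMem_normalizedFactors f (Multiset.mem_of_le ht h0),
    Multiset.map_congr rfl hdeg, Multiset.map_const', Multiset.sum_replicate, smul_eq_mul]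

theorem exists_dvd_natDegree_eq_mul (hf : f.IsEqualDegree e) (hf0 : f ≠ 0) {s : ℕ}
    (hs : s * e ≤ f.natDegree) : ∃ g, g ∣ f ∧ g.natDegree = s * e := by
  classical
  obtain rfl | he := e.eq_zero_or_pos
  · exact ⟨1, one_dvd f, by simp⟩
  have hfactors := prod_normalizedFactors hf0
  have hcard : s ≤ Multiset.card (normalizedFactors f) := by
    rw [← natDegree_eq_of_degree_eq (degree_eq_degree_of_associated hfactors),
      hf.natDegree_prod_of_le_normalizedFactors le_rfl] at hs
    exact Nat.le_of_mul_le_mul_right hs he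
  obtain ⟨t, ht⟩ := Multiset.card_pos_iff_exists_mem.1
    ((Multiset.card_powersetCard s _).symm ▸ Nat.choose_pos hcard)
  obtain ⟨hle, rfl⟩ := Multiset.mem_powersetCard.1 ht
  exact ⟨t.prod, (Multiset.prod_dvd_prod_of_le hle).trans hfactors.dvd,
    hf.natDegree_prod_of_le_normalizedFactors hle⟩

theorem dvd_of_dvd_X_pow_card_pow_sub_X (hf : f.IsEqualDegree e) (hf0 : 0 < f.natDegree) {n : ℕ}
    (h : f ∣ X ^ Nat.card K ^ n - X) : e ∣ n := by
  obtain ⟨g, hg, hgf⟩ := WfDvdMonoid.exists_irreducible_factor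
    (not_isUnit_of_natDegree_pos f hf0) (ne_zero_of_natDegree_gt hf0)
  exact hf g hg hgf ▸ hg.natDegree_dvd_of_dvd_X_pow_card_pow_sub_X (hgf.trans h)

theorem pos (hf : f.IsEqualDegree e) (hf0 : 0 < f.natDegree) : 0 < e := by
  obtain ⟨g, hg, hgf⟩ := WfDvdMonoid.exists_irreducible_factor
    (not_isUnit_of_natDegree_pos f hf0) (ne_zero_of_natDegree_gt hf0)
  exact hf g hg hgf ▸ hg.natDegree_pos

end IsEqualDegree

theorem isEqualDegree_X_pow_card_sub_X : (X ^ Nat.card K - X : K[X]).IsEqualDegree 1 :=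
  fun g hg hgT => Nat.dvd_one.1 <|
    hg.natDegree_dvd_of_dvd_X_pow_card_pow_sub_X (n := 1) (by rwa [pow_one])

theorem mul_mul_dvd_X_pow_card_pow_sub_X {L A B : K[X]} {a b : ℕ} (ha : 1 < a) (hb : 1 < b)
    (hab : a ≠ b) (hL : L ∣ X ^ Nat.card K - X) (hL0 : L ≠ 0) (hA : A.IsEqualDegree a)
    (hA0 : A ≠ 0) (hAT : A ∣ X ^ Nat.card K ^ a - X) (hB : B.IsEqualDegree b)
    (hBT : B ∣ X ^ Nat.card K ^ b - X) : L * A * B ∣ X ^ Nat.card K ^ (a * b) - X := by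
  have hL1 := isEqualDegree_X_pow_card_sub_X.of_dvd hL
  have hLT : L ∣ X ^ Nat.card K ^ (a * b) - X :=
    hL.trans (by simpa using dvd_pow_pow_sub_self_of_dvd (one_dvd (a * b)))
  exact (IsCoprime.mul_left (hL1.isCoprime hB hL0 hb.ne) (hA.isCoprime hB hA0 hab)).mul_dvd
    ((hL1.isCoprime hA hL0 ha.ne).mul_dvd hLT
      (hAT.trans (dvd_pow_pow_sub_self_of_dvd (Dvd.intro b rfl))))
    (hBT.trans (dvd_pow_pow_sub_self_of_dvd (Dvd.intro_left a rfl)))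

theorem isLeast_order_of_isEqualDegree_dvd {f A B : K[X]} {a b : ℕ} (hab : a.Coprime b)
    (hA : A.IsEqualDegree a) (hA0 : 0 < A.natDegree) (hAf : A ∣ f)
    (hB : B.IsEqualDegree b) (hB0 : 0 < B.natDegree) (hBf : B ∣ f)
    (hf : f ∣ X ^ Nat.card K ^ (a * b) - X) :
    IsLeast {n | 0 < n ∧ f ∣ X ^ Nat.card K ^ n - X} (a * b) := by
  refine ⟨⟨Nat.mul_pos (hA.pos hA0) (hB.pos hB0), hf⟩, fun n ⟨hn, hfn⟩ => Nat.le_of_dvd hn ?_⟩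
  exact hab.mul_dvd_of_dvd_of_dvd (hA.dvd_of_dvd_X_pow_card_pow_sub_X hA0 (hAf.trans hfn))
    (hB.dvd_of_dvd_X_pow_card_pow_sub_X hB0 (hBf.trans hfn))

section FiniteField

variable [Finite K]

theorem squarefree_X_pow_card_pow_sub_X {n : ℕ} (hn : n ≠ 0) :
    Squarefree (X ^ Nat.card K ^ n - X : K[X]) := by
  have := Fintype.ofFinite K
  have hQ : (Nat.card K : K) = 0 := by rw [Nat.card_eq_fintype_card]; exact Nat.cast_card_eq_zero K
  exact (galois_poly_separable (ringChar K) _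
    ((ringChar.dvd hQ).trans (dvd_pow_self _ hn))).squarefree

theorem exists_isEqualDegree_prime_pow {p i : ℕ} (hp : p.Prime) (hi : i ≠ 0) :
    ∃ V : K[X], V ∣ X ^ Nat.card K ^ p ^ i - X ∧
      V.natDegree = Nat.card K ^ p ^ i - Nat.card K ^ p ^ (i - 1) ∧ V.IsEqualDegree (p ^ i) := by
  obtain ⟨V, hV⟩ : (X ^ Nat.card K ^ p ^ (i - 1) - X : K[X]) ∣ X ^ Nat.card K ^ p ^ i - X :=
    dvd_pow_pow_sub_self_of_dvd (pow_dvd_pow p (Nat.sub_le i 1))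
  have hQ := Finite.one_lt_card (α := K)
  have hT0 := FiniteField.X_pow_card_pow_sub_X_ne_zero K (pow_ne_zero i hp.ne_zero) hQ
  have hU0 := FiniteField.X_pow_card_pow_sub_X_ne_zero K (pow_ne_zero (i - 1) hp.ne_zero) hQ
  have hV0 : V ≠ 0 := by rintro rfl; exact hT0 (by rw [hV, mul_zero])
  refine ⟨V, Dvd.intro_left _ hV.symm, ?_, fun g hg hgV => ?_⟩
  · have hdeg := congrArg natDegree hV
    rw [natDegree_mul hU0 hV0, FiniteField.X_pow_card_pow_sub_X_natDegree_eq K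
      (pow_ne_zero i hp.ne_zero) hQ, FiniteField.X_pow_card_pow_sub_X_natDegree_eq K
      (pow_ne_zero (i - 1) hp.ne_zero) hQ] at hdeg
    omega
  obtain ⟨j, hj, hgj⟩ := (Nat.dvd_prime_pow hp).1 <|
    hg.natDegree_dvd_of_dvd_X_pow_card_pow_sub_X (hgV.trans (Dvd.intro_left _ hV.symm))
  rw [hgj]
  by_contra hji
  have hji : j < i := lt_of_le_of_ne hj (by rintro rfl; exact hji rfl)
  -- then `g ^ 2` divides the squarefree polynomial `X ^ Nat.card K ^ p ^ i - X`
  have hgU : g ∣ X ^ Nat.card K ^ p ^ (i - 1) - X := by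
    rw [← hg.natDegree_dvd_iff_dvd_X_pow_card_pow_sub_X, hgj]
    exact pow_dvd_pow p (by omega)
  exact hg.not_isUnit <| squarefree_X_pow_card_pow_sub_X (pow_ne_zero i hp.ne_zero) g
    (hV ▸ mul_dvd_mul hgU hgV)

theorem exists_isEqualDegree_prime_pow_natDegree_eq_mul {p i s : ℕ} (hp : p.Prime) (hi : i ≠ 0)
    (hs : s * p ^ i ≤ Nat.card K ^ p ^ i - Nat.card K ^ p ^ (i - 1)) :
    ∃ W : K[X], W ∣ X ^ Nat.card K ^ p ^ i - X ∧ W.natDegree = s * p ^ i ∧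
      W.IsEqualDegree (p ^ i) := by
  obtain ⟨V, hVT, hVdeg, hV⟩ := exists_isEqualDegree_prime_pow (K := K) hp hi
  obtain ⟨W, hWV, hWdeg⟩ := hV.exists_dvd_natDegree_eq_mul
    (ne_zero_of_dvd_ne_zero (FiniteField.X_pow_card_pow_sub_X_ne_zero K
      (pow_ne_zero i hp.ne_zero) Finite.one_lt_card) hVT) (hVdeg ▸ hs)
  exact ⟨W, hWV.trans hVT, hWdeg, hV.of_dvd hWV⟩

end FiniteField

end Polynomial

theorem exists_mul_mod_eq_one_or_two {P q : ℕ} (hP : 2 < P) (hqP : q.Coprime P) :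
    ∃ k, 0 < k ∧ k + 2 ≤ P ∧ (k * q % P = 1 ∨ k * q % P = 2) := by
  obtain ⟨m, hmP, hm⟩ := Nat.exists_mul_mod_eq_one_of_coprime hqP (by omega)
  have hm0 : m ≠ 0 := by rintro rfl; simp at hm
  rw [mul_comm] at hm
  by_cases hmP' : m + 2 ≤ P
  · exact ⟨m, Nat.pos_of_ne_zero hm0, hmP', Or.inl hm⟩
  -- here `m = P - 1`, and `(P - 2) q ≡ 2 m q ≡ 2`
  refine ⟨P - 2, by omega, by omega, Or.inr ?_⟩
  have h : (P - 2) * q + P * q = 2 * (m * q) := by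
    rw [show m = P - 1 by omega]; zify [show 2 ≤ P by omega, show 1 ≤ P by omega]; ring
  have hmod := congrArg (· % P) h
  simp only [Nat.add_mul_mod_self_left, Nat.mul_mod 2 (m * q), hm] at hmod
  rw [hmod, mul_one, Nat.mod_mod, Nat.mod_eq_of_lt hP]

theorem mul_pred_add_two_le_two_pow {n : ℕ} (hn : 1 ≤ n) : n * (n - 1) + 2 ≤ 2 ^ n := by
  induction n, hn using Nat.le_induction with
  | base => norm_num
  | succ n hn ih =>
    obtain ⟨m, rfl⟩ := Nat.exists_eq_add_of_le' hn
    have := Nat.lt_two_pow_self (n := m + 1)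
    simp only [Nat.add_sub_cancel] at ih ⊢
    rw [pow_succ]
    nlinarith

theorem not_P2_of_natDegree_eq_add {p q i u s d : ℕ} (hp : p.Prime) (hq : q.Prime) (hi : i ≠ 0)
    (hpq : (p ^ i).Coprime q) (hu : u ≤ 2) (hs : 0 < s) (hd : 0 < d)
    (hsP : s * p ^ i ≤ 2 ^ p ^ i - 2 ^ p ^ (i - 1)) (hdq : d * q ≤ 2 ^ q - 2)
    (hsum : u + s * p ^ i + d * q = p ^ i * q) : ¬ P2 (p ^ i * q) := by
  intro hP2
  have hQ : Nat.card (ZMod 2) = 2 := Nat.card_zmod 2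
  have hT1 := FiniteField.X_pow_card_sub_X_ne_zero (ZMod 2) (p := Nat.card (ZMod 2)) (by omega)
  obtain ⟨L, hLT, hLdeg⟩ := isEqualDegree_X_pow_card_sub_X.exists_dvd_natDegree_eq_mul hT1
    (s := u) (by rwa [FiniteField.X_pow_card_sub_X_natDegree_eq _ (by omega), mul_one, hQ])
  obtain ⟨A, hAT, hAdeg, hA⟩ :=
    exists_isEqualDegree_prime_pow_natDegree_eq_mul (K := ZMod 2) hp hi (by rwa [hQ])
  obtain ⟨B, hBT, hBdeg, hB⟩ := exists_isEqualDegree_prime_pow_natDegree_eq_mul (K := ZMod 2)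
    (i := 1) (s := d) hq one_ne_zero (by simpa [hQ] using hdq)
  rw [pow_one] at hBT hBdeg hB
  have hP : 1 < p ^ i := Nat.one_lt_pow hi hp.one_lt
  have hPq : p ^ i ≠ q := by rintro h; rw [h, Nat.coprime_self] at hpq; exact hq.one_lt.ne' hpq
  have hL0 : L ≠ 0 := ne_zero_of_dvd_ne_zero hT1 hLT
  have hA0 : 0 < A.natDegree := hAdeg ▸ Nat.mul_pos hs (by omega)
  have hB0 : 0 < B.natDegree := hBdeg ▸ Nat.mul_pos hd hq.pos
  have hLA0 : L * A ≠ 0 := mul_ne_zero hL0 (ne_zero_of_natDegree_gt hA0)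
  have hLAdeg : (L * A).natDegree = u + s * p ^ i := by
    rw [natDegree_mul hL0 (ne_zero_of_natDegree_gt hA0), hLdeg, hAdeg, mul_one]
  have hfT := mul_mul_dvd_X_pow_card_pow_sub_X hP hq.one_lt hPq hLT hL0 hA
    (ne_zero_of_natDegree_gt hA0) hAT hB hBT
  have hsqf :=
    (squarefree_X_pow_card_pow_sub_X (Nat.mul_pos (by omega) hq.pos).ne').squarefree_of_dvd hfT
  have hord := isLeast_order_of_isEqualDegree_dvd hpq
    hA hA0 ((dvd_mul_left A L).mul_right B) hB hB0 (dvd_mul_left B _) hfT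
  rw [hQ] at hord
  have hirr := hP2 (L * A * B) hsqf
    (by rw [natDegree_mul hLA0 (ne_zero_of_natDegree_gt hB0), hLAdeg, hBdeg, hsum]) hord
  rcases of_irreducible_mul hirr with hunit | hunit
  · exact not_isUnit_of_natDegree_pos _ (by omega) hunit
  · exact not_isUnit_of_natDegree_pos _ hB0 hunit

theorem stmt_9_general (p q i : ℕ) (hp : p.Prime) (hq : q.Prime)
    (h2 : 2 < p ^ i) (hqi : p ^ i < q) (h : P2 (p ^ i * q)) :
    (p ^ i - 2) * q > 2 ^ p ^ i - 2 ^ p ^ (i - 1) + 1 := by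
  have hi : i ≠ 0 := by rintro rfl; simp at h2
  have hpq : (p ^ i).Coprime q :=
    ((Nat.coprime_primes hp hq).2 ((Nat.le_self_pow hi p).trans_lt hqi).ne).pow_left i
  obtain ⟨k, hk0, hkP, hu⟩ := exists_mul_mod_eq_one_or_two h2 hpq.symm
  have hkq := Nat.div_add_mod (k * q) (p ^ i)
  have hqk : q ≤ k * q := Nat.le_mul_of_pos_left q hk0
  have hkq' : k * q ≤ (p ^ i - 2) * q := Nat.mul_le_mul_right q (by omega)
  have hdq : (p ^ i - k) * q ≤ q * (q - 1) :=
    (Nat.mul_le_mul_right q (by omega : p ^ i - k ≤ q - 1)).trans_eq (mul_comm _ _)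
  have hPk : (p ^ i - k) * q + k * q = p ^ i * q := by
    rw [← Nat.add_mul, Nat.sub_add_cancel (by omega)]
  have hqq := mul_pred_add_two_le_two_pow hq.one_lt.le
  by_contra! hneg
  refine not_P2_of_natDegree_eq_add hp hq hi hpq (u := k * q % p ^ i) (s := k * q / p ^ i)
    (d := p ^ i - k) (by omega) (Nat.div_pos (hqi.le.trans hqk) (by omega)) (by omega) ?_ ?_ ?_ h
  · rw [mul_comm (k * q / p ^ i)]; omega
  · omega
  · rw [mul_comm (k * q / p ^ i)]; omega

/-- For primes `p < q` and `i ≥ 1` with `q > p^i > 2`, if `P₂` holds for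
`m = p^i * q` then `(p^i - 2) * q > 2^(p^i) - 2^(p^(i-1)) + 1`. -/
theorem stmt_9 (p q i : ℕ) (hp : p.Prime) (hq : q.Prime) (hpq : p < q) (hi : 0 < i)
    (h2 : 2 < p ^ i) (hqi : p ^ i < q) (h : P2 (p ^ i * q)) :
    (p ^ i - 2) * q > 2 ^ p ^ i - 2 ^ p ^ (i - 1) + 1 :=
  stmt_9_general p q i hp hq h2 hqi h
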